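/- (Descent inequality, key step in Lemma 2.1) For every k ≥ 0, F(x^{k+1}, ε^{k+1}) ≤ F(x^k, ε^k) + (β/2)(α^k)² ‖x^k − x^{k−1}‖₂² − (β/2) ‖x^{k+1} − x^k‖₂². -/

import Mathlib

open Filter
open scoped BigOperators InnerProductSpace

noncomputable section

/-- Real n-dimensional Euclidean space. -/
abbrev Vec (n : ℕ) := EuclideanSpace ℝ (Fin n)

/-- The smoothed objective `F(x, ε) = f(x) + λ ∑ᵢ (|xᵢ| + εᵢ)^p`. -/
def Fobj (n : ℕ) (p lam : ℝ) (f : Vec n → ℝ) (z : Vec n) (ε : Fin n → ℝ) : ℝ :=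
  f z + lam * ∑ i, (|z i| + ε i) ^ p

/-- The merit function `ψ(x, y, ε) = F(x, ε) + (β/2)‖x − y‖²`. -/
def psiObj (n : ℕ) (p lam β : ℝ) (f : Vec n → ℝ) (z y : Vec n) (ε : Fin n → ℝ) : ℝ :=
  Fobj n p lam f z ε + β / 2 * ‖z - y‖ ^ 2

/-- The weighted-ℓ₁ subproblem objective at iteration `k`:
`⟨∇f(yₖ), z⟩ + (β/2)‖z − yₖ‖² + λ ∑ᵢ wᵢᵏ |zᵢ|` with `wᵢᵏ = p(|xᵢᵏ| + εᵢᵏ)^{p−1}`. -/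
def subObj (n : ℕ) (p lam β : ℝ) (f : Vec n → ℝ) (xk yk : Vec n) (εk : Fin n → ℝ)
    (z : Vec n) : ℝ :=
  ⟪gradient f yk, z⟫_ℝ + β / 2 * ‖z - yk‖ ^ 2
    + lam * ∑ i, (p * (|xk i| + εk i) ^ (p - 1)) * |z i|

/-- All the hypotheses of the EIRL1 algorithm (Algorithm 1) together with
Assumption 2.1.  The convention `x⁻¹ = x⁰` is encoded through truncated
subtraction on ℕ (`x (k-1) = x 0` for `k = 0`). -/
structure EIRL1 (n : ℕ) (p lam β Lf μ αbar : ℝ) (f : Vec n → ℝ)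
    (x y : ℕ → Vec n) (ε : ℕ → Fin n → ℝ) (α : ℕ → ℝ) : Prop where
  hn : 1 ≤ n
  hp0 : 0 < p
  hp1 : p < 1
  hlam : 0 < lam
  hμ0 : 0 < μ
  hμ1 : μ < 1
  hLf : 0 ≤ Lf
  hβ : Lf < β
  hconv : ConvexOn ℝ Set.univ f
  hdiff : ContDiff ℝ 1 f
  hlip : ∀ a b, ‖gradient f a - gradient f b‖ ≤ Lf * ‖a - b‖
  hαbar0 : 0 ≤ αbar
  hαbar1 : αbar < 1
  hα0 : ∀ k, 0 ≤ α k
  hα1 : ∀ k, α k ≤ αbar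
  hε0 : ∀ i, 0 < ε 0 i
  hεpos : ∀ k i, 0 < ε (k + 1) i
  hεdec : ∀ k i, ε (k + 1) i ≤ μ * ε k i
  hy : ∀ k, y k = x k + α k • (x k - x (k - 1))
  hmin : ∀ k z, z ≠ x (k + 1) →
    subObj n p lam β f (x k) (y k) (ε k) (x (k + 1)) < subObj n p lam β f (x k) (y k) (ε k) z
  hlevel : Bornology.IsBounded {z : Vec n | Fobj n p lam f z 0 ≤ Fobj n p lam f (x 0) (ε 0)}

/-!
The iterate `x^{k+1}` minimises the `β`-strongly convex model
`⟨∇f(y^k), ·⟩ + (β/2)‖· − y^k‖² + λ ∑ wᵢ|·ᵢ|`, so the model at `x^k` exceeds the model at `x^{k+1}`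
by at least `(β/2)‖x^{k+1} − x^k‖²`. Since `β ≥ L_f`, the descent lemma bounds `f(x^{k+1})` above,
and convexity bounds `f(x^k)` below, by the linearisation of `f` at `y^k`. Concavity of `t ↦ t^p`
makes `λ ∑ wᵢ|xᵢ|` majorise the penalty `λ ∑ (|xᵢ| + εᵢ)^p` up to a constant, and shrinking `ε` only
lowers the penalty. What is left is `(β/2)‖x^k − y^k‖² = (β/2)(α^k)²‖x^k − x^{k−1}‖²`.
-/

open Set AffineMap
open scoped Gradient Topology

section StrongConvexity

variable {E : Type*} [NormedAddCommGroup E] [InnerProductSpace ℝ E] {s : Set E} {m : ℝ}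

lemma StrongConvexOn.add_sq_norm_sub_le_of_isMinOn {φ : E → ℝ} (hφ : StrongConvexOn s m φ)
    {x₀ z : E} (hmin : IsMinOn φ s x₀) (hx₀ : x₀ ∈ s) (hz : z ∈ s) :
    φ x₀ + m / 2 * ‖z - x₀‖ ^ 2 ≤ φ z := by
  have hchord : ∀ t ∈ Ioo (0 : ℝ) 1, φ x₀ + (1 - t) * (m / 2 * ‖z - x₀‖ ^ 2) ≤ φ z := by
    rintro t ⟨ht0, ht1⟩
    have hconv := hφ.2 hx₀ hz (sub_pos.2 ht1).le ht0.le (sub_add_cancel 1 t)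
    have hle := hmin (hφ.1 hx₀ hz (sub_pos.2 ht1).le ht0.le (sub_add_cancel 1 t))
    simp only [smul_eq_mul, norm_sub_rev x₀ z] at hconv
    refine le_of_mul_le_mul_left ?_ ht0
    linarith [hle.out]
  have hlim : Tendsto (fun t : ℝ => φ x₀ + (1 - t) * (m / 2 * ‖z - x₀‖ ^ 2))
      (𝓝[>] 0) (𝓝 (φ x₀ + m / 2 * ‖z - x₀‖ ^ 2)) := by
    exact (Continuous.tendsto' (by fun_prop) 0 _ (by simp)).mono_left nhdsWithin_le_nhds
  exact le_of_tendsto hlim (eventually_of_mem (Ioo_mem_nhdsGT zero_lt_one) hchord)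

lemma ConvexOn.strongConvexOn_add_sq_norm_sub {c : E → ℝ} (hc : ConvexOn ℝ s c) (m : ℝ)
    (y : E) : StrongConvexOn s m (fun z => c z + m / 2 * ‖z - y‖ ^ 2) := by
  rw [strongConvexOn_iff_convex]
  have hlin : ConvexOn ℝ s (fun z => ⟪-m • y, z⟫_ℝ + m / 2 * ‖y‖ ^ 2) :=
    ((innerSL ℝ (-m • y)).toLinearMap.convexOn hc.1).add (convexOn_const _ hc.1)
  have hsplit : (fun z => c z + m / 2 * ‖z - y‖ ^ 2 - m / 2 * ‖z‖ ^ 2)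
      = c + fun z => ⟪-m • y, z⟫_ℝ + m / 2 * ‖y‖ ^ 2 := by
    funext z
    simp only [Pi.add_apply, norm_sub_sq_real, real_inner_smul_left, real_inner_comm y z]
    ring
  exact hsplit ▸ hc.add hlin

end StrongConvexity

section Gradient

variable {E : Type*} [NormedAddCommGroup E] [InnerProductSpace ℝ E] [CompleteSpace E]
  {f : E → ℝ}

lemma hasDerivAt_comp_lineMap {a b : E} {t : ℝ} (hf : DifferentiableAt ℝ f (lineMap a b t)) :
    HasDerivAt (fun s => f (lineMap a b s)) ⟪∇ f (lineMap a b t), b - a⟫_ℝ t := by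
  rw [inner_gradient_left]
  exact hf.hasFDerivAt.comp_hasDerivAt t hasDerivAt_lineMap

lemma ConvexOn.add_inner_gradient_le {a : E} (hf : ConvexOn ℝ univ f)
    (hfa : DifferentiableAt ℝ f a) (b : E) : f a + ⟪∇ f a, b - a⟫_ℝ ≤ f b := by
  have hline : ConvexOn ℝ univ (fun s : ℝ => f (lineMap a b s)) :=
    hf.comp_affineMap (lineMap a b)
  have hderiv := hasDerivAt_comp_lineMap (b := b) (t := 0) (by rwa [lineMap_apply_zero])
  have hslope := hline.le_slope_of_hasDerivAt (mem_univ 0) (mem_univ 1) zero_lt_one hderiv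
  simp only [lineMap_apply_zero, lineMap_apply_one, slope_def_field] at hslope
  linarith

lemma le_add_inner_gradient_add_sq_norm {L : ℝ} (hf : Differentiable ℝ f)
    (hL : ∀ u v, ‖∇ f u - ∇ f v‖ ≤ L * ‖u - v‖) (a b : E) :
    f b ≤ f a + ⟪∇ f a, b - a⟫_ℝ + L / 2 * ‖b - a‖ ^ 2 := by
  set gap : ℝ → ℝ := fun t =>
    L / 2 * t ^ 2 * ‖b - a‖ ^ 2 - (f (lineMap a b t) - t * ⟪∇ f a, b - a⟫_ℝ) with hgap
  have hderiv : ∀ t, HasDerivAt gap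
      (L * t * ‖b - a‖ ^ 2 - (⟪∇ f (lineMap a b t), b - a⟫_ℝ - ⟪∇ f a, b - a⟫_ℝ)) t := by
    intro t
    have h1 := ((hasDerivAt_pow 2 t).const_mul (L / 2)).mul_const (‖b - a‖ ^ 2)
    have h2 := (hasDerivAt_comp_lineMap (a := a) (b := b) (hf _)).sub
      ((hasDerivAt_id t).mul_const ⟪∇ f a, b - a⟫_ℝ)
    exact (h1.sub h2).congr_deriv (by push_cast; ring)
  have hmono : MonotoneOn gap (Ici 0) := by
    refine monotoneOn_of_hasDerivWithinAt_nonneg (convex_Ici 0)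
      (fun t _ => (hderiv t).continuousAt.continuousWithinAt)
      (fun t _ => (hderiv t).hasDerivWithinAt) fun t ht => ?_
    rw [interior_Ici, mem_Ioi] at ht
    rw [sub_nonneg]
    have hdist : ‖lineMap a b t - a‖ = t * ‖b - a‖ := by
      rw [lineMap_apply, vsub_eq_sub, vadd_eq_add, add_sub_cancel_right, norm_smul,
        Real.norm_of_nonneg ht.le]
    calc ⟪∇ f (lineMap a b t), b - a⟫_ℝ - ⟪∇ f a, b - a⟫_ℝ
        = ⟪∇ f (lineMap a b t) - ∇ f a, b - a⟫_ℝ := (inner_sub_left _ _ _).symm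
      _ ≤ ‖∇ f (lineMap a b t) - ∇ f a‖ * ‖b - a‖ := real_inner_le_norm _ _
      _ ≤ L * ‖lineMap a b t - a‖ * ‖b - a‖ := by gcongr; exact hL _ _
      _ = L * t * ‖b - a‖ ^ 2 := by rw [hdist]; ring
  have hgap01 := hmono (mem_Ici.2 le_rfl) (mem_Ici.2 zero_le_one) zero_le_one
  simp only [hgap, lineMap_apply_zero, lineMap_apply_one] at hgap01
  linarith

lemma proxGrad_descent {h : E → ℝ} {L β : ℝ} (hf : ConvexOn ℝ univ f)
    (hfd : Differentiable ℝ f) (hL : ∀ u v, ‖∇ f u - ∇ f v‖ ≤ L * ‖u - v‖) (hLβ : L ≤ β)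
    (hh : ConvexOn ℝ univ h) {y x' : E}
    (hmin : IsMinOn (fun z => ⟪∇ f y, z⟫_ℝ + β / 2 * ‖z - y‖ ^ 2 + h z) univ x') (x : E) :
    f x' + h x' ≤ f x + h x + β / 2 * ‖x - y‖ ^ 2 - β / 2 * ‖x' - x‖ ^ 2 := by
  have hstrong : StrongConvexOn univ β
      (fun z => ⟪∇ f y, z⟫_ℝ + β / 2 * ‖z - y‖ ^ 2 + h z) := by
    have hc := ((innerSL ℝ (∇ f y)).toLinearMap.convexOn convex_univ).add hh
    convert hc.strongConvexOn_add_sq_norm_sub β y using 2 with z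
    simp only [Pi.add_apply, ContinuousLinearMap.coe_coe, innerSL_apply_apply]
    ring
  have three_point := hstrong.add_sq_norm_sub_le_of_isMinOn hmin (mem_univ _) (mem_univ x)
  have upper := le_add_inner_gradient_add_sq_norm hfd hL y x'
  have lower := hf.add_inner_gradient_le (hfd y) x
  rw [norm_sub_rev x x'] at three_point
  rw [inner_sub_right] at upper lower
  linarith [mul_le_mul_of_nonneg_right hLβ (sq_nonneg ‖x' - y‖)]

end Gradient

lemma Real.rpow_le_rpow_add_mul_rpow_sub_one_mul_sub {p s t : ℝ} (hp0 : 0 ≤ p) (hp1 : p ≤ 1)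
    (hs : 0 ≤ s) (ht : 0 < t) : s ^ p ≤ t ^ p + p * t ^ (p - 1) * (s - t) := by
  have hbernoulli : (1 + (s / t - 1)) ^ p ≤ 1 + p * (s / t - 1) :=
    rpow_one_add_le_one_add_mul_self (by linarith [div_nonneg hs ht.le]) hp0 hp1
  rw [add_sub_cancel] at hbernoulli
  calc s ^ p = t ^ p * (s / t) ^ p := by
        rw [← Real.mul_rpow ht.le (div_nonneg hs ht.le), mul_div_cancel₀ _ ht.ne']
    _ ≤ t ^ p * (1 + p * (s / t - 1)) := by gcongr
    _ = t ^ p + p * t ^ (p - 1) * (s - t) := by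
        rw [Real.rpow_sub_one ht.ne']
        field_simp

section WeightedL1

variable {ι : Type*} [Fintype ι]

lemma sum_rpow_abs_add_le {p : ℝ} (hp0 : 0 ≤ p) (hp1 : p ≤ 1) {ε ε' : ι → ℝ}
    (hε : ∀ i, 0 < ε i) (hε' : ∀ i, 0 ≤ ε' i) (hεε' : ∀ i, ε' i ≤ ε i) (u v : ι → ℝ) :
    ∑ i, (|v i| + ε' i) ^ p ≤ ∑ i, (|u i| + ε i) ^ p
      + (∑ i, p * (|u i| + ε i) ^ (p - 1) * |v i| - ∑ i, p * (|u i| + ε i) ^ (p - 1) * |u i|) := by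
  rw [← Finset.sum_sub_distrib, ← Finset.sum_add_distrib]
  gcongr with i
  have hpos : 0 < |u i| + ε i := by positivity [hε i]
  have htangent := Real.rpow_le_rpow_add_mul_rpow_sub_one_mul_sub hp0 hp1
    (add_nonneg (abs_nonneg (v i)) (hε' i)) hpos
  have hweight : 0 ≤ p * (|u i| + ε i) ^ (p - 1) := by positivity
  linarith [mul_le_mul_of_nonneg_left (hεε' i) hweight]

lemma convexOn_sum_mul_abs {w : ι → ℝ} (hw : ∀ i, 0 ≤ w i) :
    ConvexOn ℝ univ (fun z : EuclideanSpace ℝ ι => ∑ i, w i * |z i|) := by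
  refine ⟨convex_univ, fun u _ v _ a b ha hb _ => ?_⟩
  simp only [smul_eq_mul, Finset.mul_sum, ← Finset.sum_add_distrib]
  gcongr with i
  have htriangle : |a * u i + b * v i| ≤ a * |u i| + b * |v i| := by
    simpa only [abs_mul, abs_of_nonneg ha, abs_of_nonneg hb] using abs_add_le (a * u i) (b * v i)
  simp only [PiLp.add_apply, PiLp.smul_apply, smul_eq_mul]
  linarith [mul_le_mul_of_nonneg_left htriangle (hw i)]

end WeightedL1

/-- Descent inequality (key step in Lemma 2.1):
`F(xᵏ⁺¹, εᵏ⁺¹) ≤ F(xᵏ, εᵏ) + (β/2)(αᵏ)²‖xᵏ − xᵏ⁻¹‖² − (β/2)‖xᵏ⁺¹ − xᵏ‖²`. -/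
theorem stmt_4 (n : ℕ) (p lam β Lf μ αbar : ℝ) (f : Vec n → ℝ)
    (x y : ℕ → Vec n) (ε : ℕ → Fin n → ℝ) (α : ℕ → ℝ)
    (H : EIRL1 n p lam β Lf μ αbar f x y ε α) :
    ∀ k, Fobj n p lam f (x (k + 1)) (ε (k + 1))
        ≤ Fobj n p lam f (x k) (ε k) + β / 2 * (α k) ^ 2 * ‖x k - x (k - 1)‖ ^ 2
          - β / 2 * ‖x (k + 1) - x k‖ ^ 2 := by
  intro k
  have hεk : ∀ i, 0 < ε k i := by
    cases k with
    | zero => exact H.hε0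
    | succ j => exact H.hεpos j
  have hεdec : ∀ i, ε (k + 1) i ≤ ε k i := fun i =>
    (H.hεdec k i).trans (mul_le_of_le_one_left (hεk i).le H.hμ1.le)
  have hweights : ∀ i, 0 ≤ p * (|x k i| + ε k i) ^ (p - 1) := fun i =>
    mul_nonneg H.hp0.le (Real.rpow_nonneg (add_nonneg (abs_nonneg _) (hεk i).le) _)
  have hmin : IsMinOn (subObj n p lam β f (x k) (y k) (ε k)) univ (x (k + 1)) :=
    isMinOn_univ_iff.2 fun z => by
      rcases eq_or_ne z (x (k + 1)) with rfl | hz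
      · exact le_rfl
      · exact (H.hmin k z hz).le
  have hstep := proxGrad_descent H.hconv (H.hdiff.differentiable one_ne_zero) H.hlip H.hβ.le
    ((convexOn_sum_mul_abs hweights).smul H.hlam.le) hmin (x k)
  have hmajorize := sum_rpow_abs_add_le H.hp0.le H.hp1.le hεk (fun i => (H.hεpos k i).le) hεdec
    (x k) (x (k + 1))
  have hinertia : ‖x k - y k‖ ^ 2 = α k ^ 2 * ‖x k - x (k - 1)‖ ^ 2 := by
    rw [H.hy k, sub_add_cancel_left, norm_neg, norm_smul, mul_pow, Real.norm_eq_abs, sq_abs]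
  have hpenalty := mul_le_mul_of_nonneg_left hmajorize H.hlam.le
  rw [mul_add, mul_sub] at hpenalty
  rw [hinertia, smul_eq_mul, smul_eq_mul] at hstep
  unfold Fobj
  linarith
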